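/- Asymptotically as |a| → ∞, the Böttcher coordinate of the critical value satisfies Φ_∞(a) = φ_a^∞(f_a(-a)) ~ -(-a)^d/(d-1); consequently the proper holomorphic map Φ_∞ : ℋ_∞ ∪ {∞} → (ℂ̄ \ 𝔻̄) has local degree d at ∞. -/

import Mathlib

/-!
For `|a| ≥ d` the orbit `z_k = f_a^k(f_a(-a))` of the critical value escapes geometrically,
`|z_k| ≥ |a|^2 4^k`, so the factors of the product satisfy `|F_a(z_k) - 1| ≤ 3/(2|a|) · 4^{-k}`.
Writing `F_a(z_k)^{1/d^{k+1}} = exp(log F_a(z_k) / d^{k+1})`, the product is `exp g(a)` with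
`|g(a)| = O(1/|a|)`, hence tends to `1`; and `f_a(-a) = -(-a)^d/(d-1)` exactly.
-/

noncomputable def fpoly (d : ℕ) (a : ℂ) (z : ℂ) : ℂ :=
  z ^ (d - 1) * (z + (d : ℂ) * a / ((d : ℂ) - 1))

def Hinf (d : ℕ) : Set ℂ :=
  {a : ℂ | Filter.Tendsto (fun n : ℕ => ‖(fpoly d a)^[n] (-a)‖)
    Filter.atTop Filter.atTop}

/-- `F_a(z) = f_a(z)/z^d = 1 + d·a/((d-1)z)`. -/
noncomputable def Fcoef (d : ℕ) (a z : ℂ) : ℂ :=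
  1 + (d : ℂ) * a / (((d : ℂ) - 1) * z)

open Complex Filter Topology

theorem Complex.norm_log_mul_le {w e : ℂ} (hw : ‖w - 1‖ ≤ 1 / 2) (he : ‖e‖ ≤ 1) :
    ‖log w * e‖ ≤ 3 / 2 * ‖w - 1‖ := by
  have hlog := norm_log_one_add_half_le_self hw
  rw [add_sub_cancel] at hlog
  calc ‖log w * e‖ = ‖log w‖ * ‖e‖ := norm_mul _ _
    _ ≤ ‖log w‖ * 1 := by gcongr
    _ ≤ 3 / 2 * ‖w - 1‖ := by rwa [mul_one]

theorem Complex.tprod_cpow_eq_cexp_tsum {w e : ℕ → ℂ} (hw : ∀ k, w k ≠ 0)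
    (hs : Summable fun k => log (w k) * e k) :
    ∏' k, w k ^ e k = cexp (∑' k, log (w k) * e k) := by
  have hcpow : (fun k => w k ^ e k) = cexp ∘ fun k => log (w k) * e k :=
    funext fun k => cpow_def_of_ne_zero (hw k) _
  rw [hcpow]
  exact hs.hasSum.cexp.tprod_eq

theorem norm_sub_one_le_half_of_le_geometric {w : ℕ → ℂ} {c r : ℝ} (hc : c ≤ 1 / 2)
    (hr0 : 0 ≤ r) (hr1 : r ≤ 1) (hw : ∀ k, ‖w k - 1‖ ≤ c * r ^ k) (k : ℕ) :
    ‖w k - 1‖ ≤ 1 / 2 := by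
  have hc0 : 0 ≤ c := by simpa using (norm_nonneg _).trans (hw 0)
  calc ‖w k - 1‖ ≤ c * r ^ k := hw k
    _ ≤ c * 1 := by gcongr; exact pow_le_one₀ hr0 hr1
    _ ≤ 1 / 2 := by linarith

theorem Complex.tendsto_tprod_cpow_nhds_one {α : Type*} {l : Filter α} {w : α → ℕ → ℂ}
    {e : ℕ → ℂ} {c : α → ℝ} {r : ℝ} (hc : Tendsto c l (𝓝 0)) (hr0 : 0 ≤ r) (hr1 : r < 1)
    (hw : ∀ᶠ x in l, ∀ k, ‖w x k - 1‖ ≤ c x * r ^ k) (he : ∀ k, ‖e k‖ ≤ 1) :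
    Tendsto (fun x => ∏' k, w x k ^ e k) l (𝓝 1) := by
  set g := fun x => ∑' k, log (w x k) * e k
  have hexp : ∀ᶠ x in l, ∏' k, w x k ^ e k = cexp (g x) ∧ ‖g x‖ ≤ 3 / 2 * c x * (1 - r)⁻¹ := by
    filter_upwards [hw, hc.eventually (ge_mem_nhds (by norm_num : (0 : ℝ) < 1 / 2))]
      with x hwx hcx
    have hhalf := norm_sub_one_le_half_of_le_geometric hcx hr0 hr1.le hwx
    have hterm : ∀ k, ‖log (w x k) * e k‖ ≤ 3 / 2 * c x * r ^ k := fun k => by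
      linarith [norm_log_mul_le (hhalf k) (he k), hwx k]
    have hgeo : HasSum (fun k => 3 / 2 * c x * r ^ k) (3 / 2 * c x * (1 - r)⁻¹) :=
      (hasSum_geometric_of_lt_one hr0 hr1).mul_left _
    have hne : ∀ k, w x k ≠ 0 := fun k h => by
      have := hhalf k
      norm_num [h] at this
    exact ⟨tprod_cpow_eq_cexp_tsum hne (hgeo.summable.of_norm_bounded hterm),
      tsum_of_norm_bounded hgeo hterm⟩
  have hg : Tendsto g l (𝓝 0) := by
    refine squeeze_zero_norm' (hexp.mono fun x hx => hx.2) ?_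
    simpa using (hc.const_mul (3 / 2)).mul_const (1 - r)⁻¹
  simpa using hg.cexp.congr' (hexp.mono fun x hx => hx.1.symm)

section Dynamics

variable {d : ℕ}

theorem natCast_sub_one_ne_zero (hd : 2 ≤ d) : (d : ℂ) - 1 ≠ 0 := by
  rw [← Nat.cast_pred (by omega)]
  exact Nat.cast_ne_zero.mpr (by omega)

theorem norm_natCast_sub_one (hd : 1 ≤ d) : ‖(d : ℂ) - 1‖ = d - 1 := by
  rw [← Nat.cast_pred hd, norm_natCast, Nat.cast_pred hd]

theorem fpoly_neg_self (hd : 2 ≤ d) (a : ℂ) : fpoly d a (-a) = -(-a) ^ d / ((d : ℂ) - 1) := by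
  obtain ⟨e, rfl⟩ : ∃ e, d = e + 1 := ⟨d - 1, by omega⟩
  have he : (e : ℂ) ≠ 0 := by simpa using natCast_sub_one_ne_zero hd
  simp only [fpoly, Nat.add_sub_cancel, pow_succ, Nat.cast_add, Nat.cast_one, add_sub_cancel_right]
  field_simp
  ring

theorem norm_Fcoef_sub_one (hd : 1 ≤ d) (a z : ℂ) :
    ‖Fcoef d a z - 1‖ = d * ‖a‖ / ((d - 1) * ‖z‖) := by
  rw [Fcoef, add_sub_cancel_left, norm_div, norm_mul, norm_mul, norm_natCast,
    norm_natCast_sub_one hd]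

theorem four_mul_norm_le_norm_fpoly (hd : 3 ≤ d) {a z : ℂ} (hz : 2 * ‖a‖ ≤ ‖z‖)
    (hz4 : 4 ≤ ‖z‖) : 4 * ‖z‖ ≤ ‖fpoly d a z‖ := by
  have h3 : (3 : ℝ) ≤ d := by exact_mod_cast hd
  set c := (d : ℂ) * a / ((d : ℂ) - 1)
  have hc : ‖c‖ ≤ 3 / 4 * ‖z‖ := by
    rw [norm_div, norm_mul, norm_natCast, norm_natCast_sub_one (by omega),
      div_le_iff₀ (by linarith)]
    nlinarith [norm_nonneg a]
  have hsum : ‖z‖ / 4 ≤ ‖z + c‖ := by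
    have := norm_sub_norm_le z (-c)
    rw [sub_neg_eq_add, norm_neg] at this
    linarith
  have hpow : ‖z‖ ^ 2 ≤ ‖z‖ ^ (d - 1) := pow_le_pow_right₀ (by linarith) (by omega)
  calc 4 * ‖z‖ ≤ ‖z‖ ^ 2 * (‖z‖ / 4) := by nlinarith
    _ ≤ ‖z‖ ^ (d - 1) * ‖z + c‖ := by gcongr
    _ = ‖fpoly d a z‖ := by rw [fpoly, norm_mul, norm_pow]

theorem sq_mul_four_pow_le_norm_iterate (hd : 3 ≤ d) {a : ℂ} (ha : d ≤ ‖a‖) (k : ℕ) :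
    ‖a‖ ^ 2 * 4 ^ k ≤ ‖(fpoly d a)^[k] (fpoly d a (-a))‖ := by
  have h3 : (3 : ℝ) ≤ d := by exact_mod_cast hd
  induction k with
  | zero =>
    rw [Function.iterate_zero_apply, fpoly_neg_self (by omega), norm_div, norm_neg, norm_pow,
      norm_neg, norm_natCast_sub_one (by omega), pow_zero, mul_one, le_div_iff₀ (by linarith)]
    calc ‖a‖ ^ 2 * (d - 1) ≤ ‖a‖ ^ 3 := by nlinarith
      _ ≤ ‖a‖ ^ d := pow_le_pow_right₀ (by linarith) hd
  | succ k ih =>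
    have h4k : (1 : ℝ) ≤ 4 ^ k := one_le_pow₀ (by norm_num)
    rw [Function.iterate_succ_apply']
    calc ‖a‖ ^ 2 * 4 ^ (k + 1) = 4 * (‖a‖ ^ 2 * 4 ^ k) := by ring
      _ ≤ 4 * ‖(fpoly d a)^[k] (fpoly d a (-a))‖ := by gcongr
      _ ≤ _ := four_mul_norm_le_norm_fpoly hd (by nlinarith) (by nlinarith)

theorem norm_Fcoef_iterate_sub_one_le (hd : 3 ≤ d) {a : ℂ} (ha : d ≤ ‖a‖) (k : ℕ) :
    ‖Fcoef d a ((fpoly d a)^[k] (fpoly d a (-a))) - 1‖ ≤ 3 / (2 * ‖a‖) * (1 / 4) ^ k := by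
  have h3 : (3 : ℝ) ≤ d := by exact_mod_cast hd
  have horbit := sq_mul_four_pow_le_norm_iterate hd ha k
  have ha0 : 0 < ‖a‖ := by linarith
  have hz : 0 < ‖(fpoly d a)^[k] (fpoly d a (-a))‖ := lt_of_lt_of_le (by positivity) horbit
  rw [norm_Fcoef_sub_one (by omega), div_le_iff₀ (by nlinarith)]
  calc d * ‖a‖ ≤ 3 / 2 * (d - 1) * ‖a‖ := by nlinarith
    _ = 3 / (2 * ‖a‖) * (1 / 4) ^ k * ((d - 1) * (‖a‖ ^ 2 * 4 ^ k)) := by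
      rw [one_div_pow]
      field_simp
    _ ≤ 3 / (2 * ‖a‖) * (1 / 4) ^ k * ((d - 1) * ‖(fpoly d a)^[k] (fpoly d a (-a))‖) := by
      gcongr
      linarith

theorem norm_one_div_natCast_pow_le (hd : 1 ≤ d) (k : ℕ) : ‖(1 : ℂ) / (d : ℂ) ^ (k + 1)‖ ≤ 1 := by
  rw [norm_div, norm_one, norm_pow, norm_natCast]
  exact div_le_one_of_le₀ (one_le_pow₀ (by exact_mod_cast hd)) (by positivity)

end Dynamics

/-- The Böttcher coordinate of the critical value, given by the infinite product,
satisfies `Φ_∞(a) ~ -(-a)^d/(d-1)` as `|a| → ∞` within `ℋ_∞`; in particular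
`|Φ_∞(a)|/|a|^d → 1/(d-1)`, so `Φ_∞` has local degree `d` at `∞`. -/
theorem stmt14 (d : ℕ) (hd : 3 ≤ d) (Φ : ℂ → ℂ)
    (hΦ : ∀ a ∈ Hinf d, Φ a = fpoly d a (-a) *
      ∏' k : ℕ, (Fcoef d a ((fpoly d a)^[k] (fpoly d a (-a)))) ^
        ((1 : ℂ) / (d : ℂ) ^ (k + 1))) :
    Filter.Tendsto (fun a : ℂ => Φ a / (-(-a) ^ d / ((d : ℂ) - 1)))
      ((Filter.comap (fun z : ℂ => ‖z‖) Filter.atTop) ⊓ Filter.principal (Hinf d))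
      (nhds 1) ∧
    Filter.Tendsto (fun a : ℂ => ‖Φ a‖ / ‖a‖ ^ d)
      ((Filter.comap (fun z : ℂ => ‖z‖) Filter.atTop) ⊓ Filter.principal (Hinf d))
      (nhds (1 / ((d : ℝ) - 1))) := by
  set L := (Filter.comap (fun z : ℂ => ‖z‖) Filter.atTop) ⊓ Filter.principal (Hinf d)
  have hnorm : Tendsto (fun a : ℂ => ‖a‖) L atTop := tendsto_comap.mono_left inf_le_left
  have hlarge : ∀ᶠ a in L, a ∈ Hinf d ∧ (d : ℝ) ≤ ‖a‖ ∧ a ≠ 0 :=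
    (eventually_inf_principal.mpr (.of_forall fun _ h => h)).and <|
      (hnorm.eventually_ge_atTop _).and <|
        (hnorm.eventually_gt_atTop 0).mono fun _ => norm_pos_iff.mp
  have hratio : Tendsto (fun a => Φ a / (-(-a) ^ d / ((d : ℂ) - 1))) L (𝓝 1) := by
    refine (tendsto_tprod_cpow_nhds_one (tendsto_const_nhds.div_atTop
      (hnorm.const_mul_atTop two_pos)) (by norm_num) (by norm_num)
      (hlarge.mono fun a ha => norm_Fcoef_iterate_sub_one_le hd ha.2.1)
      (norm_one_div_natCast_pow_le (d := d) (by omega))).congr' ?_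
    filter_upwards [hlarge] with a ⟨hH, _, ha0⟩
    rw [hΦ a hH, fpoly_neg_self (by omega), mul_div_cancel_left₀]
    exact div_ne_zero (neg_ne_zero.mpr (pow_ne_zero _ (neg_ne_zero.mpr ha0)))
      (natCast_sub_one_ne_zero (by omega))
  refine ⟨hratio, ?_⟩
  have hd1 : (d : ℝ) - 1 ≠ 0 := by
    have : (3 : ℝ) ≤ d := by exact_mod_cast hd
    linarith
  have hnorm_ratio : ∀ᶠ a in L,
      ‖Φ a / (-(-a) ^ d / ((d : ℂ) - 1))‖ * (1 / ((d : ℝ) - 1)) = ‖Φ a‖ / ‖a‖ ^ d := by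
    filter_upwards [hlarge] with a ⟨_, _, ha0⟩
    rw [norm_div, norm_div, norm_neg, norm_pow, norm_neg, norm_natCast_sub_one (by omega)]
    field_simp
  simpa using (hratio.norm.mul_const (1 / ((d : ℝ) - 1))).congr' hnorm_ratio
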